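/- arXiv:1003.3785 — 5 statements merged into one kernel-verified Lean document; each statement's English description precedes it below -/
import Mathlib

section
/- Let R = K(x)[∂; id, d/dx] be the first rational Weyl algebra over a field K of characteristic 0. Let a, b ∈ R with deg(a) > 0, b ≠ 0 and deg(b) ≥ deg(a). Then there exists i ∈ {0, 1, ..., deg(b) − deg(a) + 1} such that a is not a strict right divisor of b·x^i, i.e., there is no q ∈ R with b·x^i = q·a. -/
/-- An Ore extension (skew polynomial ring) `R = A[∂; σ, δ]`: it contains `A` via `ι`,
the distinguished element `d = ∂` satisfies the commutation rule
`∂ · a = σ(a) · ∂ + δ(a)`, and every element of `R` has a unique representation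
as a polynomial `∑ ι(aₙ) ∂ⁿ` with left coefficients in `A`. -/
structure OreExtension (A : Type*) [Ring A] (R : Type*) [Ring R]
    (σ : A →+* A) (δ : A →+ A) : Type _ where
  ι : A →+* R
  d : R
  comm : ∀ a : A, d * ι a = ι (σ a) * d + ι (δ a)
  coeff : R ≃+ (ℕ →₀ A)
  coeff_symm : ∀ p : ℕ →₀ A, coeff.symm p = p.sum fun n a => ι a * d ^ n

/-- The degree in `∂` of an element of an Ore extension (`0` has degree `0`). -/
noncomputable def OreExtension.deg {A : Type*} [Ring A] {R : Type*} [Ring R]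
    {σ : A →+* A} {δ : A →+ A} (e : OreExtension A R σ δ) (r : R) : ℕ :=
  (e.coeff r).support.sup id

section Aux

variable {F R : Type*} [Field F] [CharZero F] [Ring R] {δ : F →+ F} {x : F}
variable (e : OreExtension F R (RingHom.id F) δ)

lemma wa_repr (r : R) :
    r = ∑ n ∈ (e.coeff r).support, e.ι ((e.coeff r) n) * e.d ^ n := by
  conv_lhs => rw [← e.coeff.symm_apply_apply r, e.coeff_symm]
  rfl

lemma wa_coeff_single (c : F) (n : ℕ) :
    e.coeff (e.ι c * e.d ^ n) = Finsupp.single n c := by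
  have h : e.coeff.symm (Finsupp.single n c) = e.ι c * e.d ^ n := by
    rw [e.coeff_symm, Finsupp.sum_single_index (by simp)]
  rw [← h, AddEquiv.apply_symm_apply]

lemma wa_coeff_vanish (r : R) {j : ℕ} (h : e.deg r < j) : e.coeff r j = 0 := by
  by_contra hc
  have hj : j ∈ (e.coeff r).support := Finsupp.mem_support_iff.mpr hc
  have := Finset.le_sup (f := id) hj
  simp only [OreExtension.deg, id] at h this
  omega

lemma wa_coeff_deg_ne_zero {r : R} (h : r ≠ 0) : e.coeff r (e.deg r) ≠ 0 := by
  have hne : (e.coeff r).support.Nonempty := by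
    rw [Finsupp.support_nonempty_iff]
    intro h0
    exact h (by simpa using congrArg e.coeff.symm h0)
  obtain ⟨i, hi, hsup⟩ := Finset.exists_mem_eq_sup _ hne id
  have : e.deg r = i := hsup
  rw [this]
  exact Finsupp.mem_support_iff.mp hi

lemma wa_ne_zero_of_deg_pos {r : R} (h : 0 < e.deg r) : r ≠ 0 := by
  intro h0
  rw [h0] at h
  simp [OreExtension.deg, map_zero] at h

lemma wa_dX (hx : δ x = 1) : ∀ n : ℕ, e.d ^ n * e.ι x = e.ι x * e.d ^ n + n • e.d ^ (n - 1) := by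
  intro n
  induction n with
  | zero => simp
  | succ n ih =>
    have hcomm : e.d * e.ι x = e.ι x * e.d + 1 := by
      rw [e.comm x]; simp [hx]
    rw [pow_succ, mul_assoc, hcomm, mul_add, ← mul_assoc, ih, mul_one]
    rw [add_mul, smul_mul_assoc, ← pow_succ]
    have hns : (n : ℕ) • e.d ^ (n - 1 + 1) = n • e.d ^ n := by
      cases n with
      | zero => simp
      | succ m => norm_num
    rw [hns]
    rw [succ_nsmul, Nat.add_sub_cancel, mul_assoc, add_assoc]

lemma wa_coeff_iota_mul (c : F) (r : R) (j : ℕ) :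
    e.coeff (e.ι c * r) j = c * e.coeff r j := by
  conv_lhs => rw [wa_repr e r]
  rw [Finset.mul_sum]
  have hterm : ∀ n : ℕ, e.ι c * (e.ι (e.coeff r n) * e.d ^ n)
      = e.ι (c * e.coeff r n) * e.d ^ n := by
    intro n; rw [← mul_assoc, ← map_mul]
  simp_rw [hterm]
  rw [map_sum]
  simp_rw [wa_coeff_single]
  rw [Finsupp.finset_sum_apply]
  rcases Finset.decidableMem j (e.coeff r).support with hj | hj
  · rw [Finset.sum_eq_zero, Finsupp.notMem_support_iff.mp hj, mul_zero]
    intro n hn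
    rw [Finsupp.single_apply, if_neg, ]
    intro hnj; exact hj (hnj ▸ hn)
  · rw [Finset.sum_eq_single j]
    · rw [Finsupp.single_eq_same]
    · intro n hn hnj; rw [Finsupp.single_apply, if_neg hnj]
    · intro h; exact absurd hj h

lemma wa_coeff_d_mul (r : R) (j : ℕ) :
    e.coeff (e.d * r) j = (if j = 0 then 0 else e.coeff r (j - 1)) + δ (e.coeff r j) := by
  conv_lhs => rw [wa_repr e r]
  rw [Finset.mul_sum]
  have hterm : ∀ n : ℕ, e.d * (e.ι (e.coeff r n) * e.d ^ n)
      = e.ι (e.coeff r n) * e.d ^ (n + 1) + e.ι (δ (e.coeff r n)) * e.d ^ n := by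
    intro n
    rw [← mul_assoc, e.comm, RingHom.id_apply, add_mul, mul_assoc, ← pow_succ']
  simp_rw [hterm]
  rw [map_sum]
  simp_rw [map_add, wa_coeff_single]
  rw [Finset.sum_add_distrib, Finsupp.add_apply]
  congr 1
  · -- shifted part
    rw [Finsupp.finset_sum_apply]
    rcases Nat.eq_zero_or_pos j with hj0 | hjpos
    · subst hj0
      rw [if_pos rfl]
      apply Finset.sum_eq_zero
      intro n hn
      rw [Finsupp.single_apply, if_neg (by omega)]
    · rw [if_neg (by omega)]
      rw [Finset.sum_eq_single (j - 1)]
      · rw [Finsupp.single_apply, if_pos (by omega)]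
      · intro n hn hnj
        rw [Finsupp.single_apply, if_neg (by omega)]
      · intro h
        rw [Finsupp.notMem_support_iff.mp h, Finsupp.single_apply]
        simp
  · rw [Finsupp.finset_sum_apply]
    rw [Finset.sum_eq_single j]
    · rw [Finsupp.single_eq_same]
    · intro n hn hnj; rw [Finsupp.single_apply, if_neg hnj]
    · intro h
      rw [Finsupp.notMem_support_iff.mp h, map_zero, Finsupp.single_apply]
      simp

/-- The "derivative with respect to ∂" map. -/
def waD (e : OreExtension F R (RingHom.id F) δ) (x : F) : R → R :=
  fun r => r * e.ι x - e.ι x * r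

lemma wa_coeff_D (hx : δ x = 1) (r : R) (k : ℕ) :
    e.coeff (waD e x r) k = (k + 1) • e.coeff r (k + 1) := by
  show e.coeff (r * e.ι x - e.ι x * r) k = _
  conv_lhs => rw [wa_repr e r]
  rw [Finset.sum_mul, Finset.mul_sum, ← Finset.sum_sub_distrib]
  have hterm : ∀ n : ℕ, (e.ι (e.coeff r n) * e.d ^ n) * e.ι x
      - e.ι x * (e.ι (e.coeff r n) * e.d ^ n)
      = n • (e.ι (e.coeff r n) * e.d ^ (n - 1)) := by
    intro n
    rw [mul_assoc, wa_dX e hx n, mul_add, ← mul_assoc, ← map_mul, mul_comm (e.coeff r n) x,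
      map_mul, mul_assoc, mul_smul_comm]
    abel
  simp_rw [hterm]
  rw [map_sum]
  simp_rw [map_nsmul, wa_coeff_single]
  rw [Finsupp.finset_sum_apply]
  rw [Finset.sum_eq_single (k + 1)]
  · rw [Finsupp.smul_apply, Finsupp.single_apply, if_pos (by omega)]
  · intro n hn hnk
    rw [Finsupp.smul_apply, Finsupp.single_apply]
    cases n with
    | zero => simp
    | succ m => rw [if_neg (by omega), smul_zero]
  · intro h
    rw [Finsupp.notMem_support_iff.mp h]
    simp

lemma wa_coeff_d_pow_mul (r : R) (k : ℕ) (hr : ∀ j, k < j → e.coeff r j = 0) :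
    ∀ i, e.coeff (e.d ^ i * r) (k + i) = e.coeff r k ∧
      ∀ m, k + i < m → e.coeff (e.d ^ i * r) m = 0 := by
  intro i
  induction i with
  | zero => simpa using hr
  | succ i ih =>
    have hrw : e.d ^ (i + 1) * r = e.d * (e.d ^ i * r) := by
      rw [pow_succ', mul_assoc]
    constructor
    · rw [hrw, wa_coeff_d_mul, if_neg (by omega)]
      have h1 : k + (i + 1) - 1 = k + i := by omega
      rw [h1, ih.1, ih.2 (k + (i + 1)) (by omega), map_zero, add_zero]
    · intro m hm
      rw [hrw, wa_coeff_d_mul, if_neg (by omega)]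
      rw [ih.2 (m - 1) (by omega), ih.2 m (by omega), map_zero, add_zero]

lemma wa_coeff_mul_top (q r : R) (p n : ℕ)
    (hq : ∀ j, p < j → e.coeff q j = 0) (hr : ∀ j, n < j → e.coeff r j = 0) :
    e.coeff (q * r) (p + n) = e.coeff q p * e.coeff r n := by
  conv_lhs => rw [wa_repr e q]
  rw [Finset.sum_mul]
  simp_rw [mul_assoc]
  rw [map_sum, Finsupp.finset_sum_apply]
  simp_rw [wa_coeff_iota_mul]
  rw [Finset.sum_eq_single p]
  · congr 1
    have := (wa_coeff_d_pow_mul e r n hr p).1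
    rw [add_comm n p] at this
    exact this
  · intro i hi hip
    have hile : i < p := by
      by_contra hgt
      exact (Finsupp.mem_support_iff.mp hi) (hq i (by omega))
    rw [(wa_coeff_d_pow_mul e r n hr i).2 (p + n) (by omega), mul_zero]
  · intro h
    rw [Finsupp.notMem_support_iff.mp h, zero_mul]

lemma wa_D_iter_vanish (hx : δ x = 1) (b : R) (M : ℕ) (hb : ∀ j, M < j → e.coeff b j = 0) :
    ∀ k j, M < j + k → e.coeff ((waD e x)^[k] b) j = 0 := by
  intro k
  induction k with
  | zero => intro j hj; exact hb j (by omega)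
  | succ k ih =>
    intro j hj
    rw [Function.iterate_succ_apply', wa_coeff_D e hx]
    rw [ih (j + 1) (by omega), smul_zero]

lemma wa_D_iter_top (hx : δ x = 1) (b : R) (M : ℕ) :
    ∀ k, k ≤ M → ∃ c : ℕ, 0 < c ∧
      e.coeff ((waD e x)^[k] b) (M - k) = c • e.coeff b M := by
  intro k
  induction k with
  | zero => exact fun _ => ⟨1, one_pos, by simp⟩
  | succ k ih =>
    intro hk
    obtain ⟨c, hc, htop⟩ := ih (by omega)
    refine ⟨(M - k) * c, Nat.mul_pos (by omega) hc, ?_⟩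
    rw [Function.iterate_succ_apply', wa_coeff_D e hx]
    have h1 : M - (k + 1) + 1 = M - k := by omega
    rw [h1, htop, smul_smul]

lemma wa_div_D (hx : δ x = 1) (a : R) :
    ∀ k b, (∀ i ≤ k, ∃ q : R, b * e.ι x ^ i = q * a) →
      ∃ q : R, (waD e x)^[k] b = q * a := by
  intro k
  induction k with
  | zero =>
    intro b h
    obtain ⟨q, hq⟩ := h 0 le_rfl
    exact ⟨q, by simpa using hq⟩
  | succ k ih =>
    intro b h
    rw [Function.iterate_succ_apply]
    apply ih
    intro i hi
    obtain ⟨q1, h1⟩ := h (i + 1) (by omega)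
    obtain ⟨q0, h0⟩ := h i (by omega)
    refine ⟨q1 - e.ι x * q0, ?_⟩
    show (b * e.ι x - e.ι x * b) * e.ι x ^ i = _
    rw [sub_mul, mul_assoc, mul_assoc, ← pow_succ', h1, h0, sub_mul, mul_assoc]

end Aux

/-- In the first rational Weyl algebra `R = K(x)[∂; id, d/dx]` (modelled as the Ore
extension of the field `F = K(x)` of characteristic `0` by `∂` with `σ = id` and `δ`
a derivation satisfying `δ(x) = 1`): if `deg a > 0`, `b ≠ 0` and `deg b ≥ deg a`,
then for some `i ∈ {0, …, deg b − deg a + 1}` the element `a` is not a strict right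
divisor of `b·xⁱ`. -/
theorem rational_weyl_not_right_divisor {F R : Type*} [Field F] [CharZero F] [Ring R]
    (δ : F →+ F) (hδ : ∀ a b : F, δ (a * b) = a * δ b + δ a * b)
    (x : F) (hx : δ x = 1)
    (e : OreExtension F R (RingHom.id F) δ)
    (a b : R) (ha : 0 < e.deg a) (hb : b ≠ 0) (hab : e.deg a ≤ e.deg b) :
    ∃ i : ℕ, i ≤ e.deg b - e.deg a + 1 ∧ ¬∃ q : R, b * e.ι x ^ i = q * a := by
  by_contra hcon
  push_neg at hcon
  set n := e.deg a with hn
  set m := e.deg b with hm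
  set k := m - n + 1 with hk
  have hkM : k ≤ m := by omega
  obtain ⟨Q, hQ⟩ := wa_div_D e hx a k b hcon
  have hbv : ∀ j, m < j → e.coeff b j = 0 := fun j hj => wa_coeff_vanish e b hj
  obtain ⟨c, hc, htop⟩ := wa_D_iter_top e hx b m k hkM
  have hbm : e.coeff b m ≠ 0 := wa_coeff_deg_ne_zero e hb
  have hDk_ne : e.coeff ((waD e x)^[k] b) (m - k) ≠ 0 := by
    rw [htop, nsmul_eq_mul]
    exact mul_ne_zero (Nat.cast_ne_zero.2 hc.ne') hbm
  rcases eq_or_ne Q 0 with h0 | h0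
  · rw [h0, zero_mul] at hQ
    rw [hQ, map_zero] at hDk_ne
    exact hDk_ne rfl
  · have haN : a ≠ 0 := wa_ne_zero_of_deg_pos e ha
    have han : e.coeff a n ≠ 0 := wa_coeff_deg_ne_zero e haN
    have hQp : e.coeff Q (e.deg Q) ≠ 0 := wa_coeff_deg_ne_zero e h0
    have hmul := wa_coeff_mul_top e Q a (e.deg Q) n
      (fun j hj => wa_coeff_vanish e Q hj) (fun j hj => wa_coeff_vanish e a hj)
    have hvan : e.coeff ((waD e x)^[k] b) (e.deg Q + n) = 0 :=
      wa_D_iter_vanish e hx b m hbv k (e.deg Q + n) (by omega)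
    rw [hQ, hmul] at hvan
    exact mul_ne_zero hQp han hvan
end

section
/- Let A be a division ring, σ: A → A an injective ring endomorphism, δ a σ-derivation, and R = A[∂; σ, δ] the corresponding Ore extension. Then R is a left principal ideal domain: R has no zero divisors and every left ideal of R is generated by a single element. -/
namespace OreExtension

variable {A R : Type*} [DivisionRing A] [Ring R] {σ : A →+* A} {δ : A →+ A}
  (e : OreExtension A R σ δ)

lemma coeff_mono (a : A) (k : ℕ) :
    e.coeff (e.ι a * e.d ^ k) = Finsupp.single k a := by
  have h : e.coeff.symm (Finsupp.single k a) = e.ι a * e.d ^ k := by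
    rw [e.coeff_symm, Finsupp.sum_single_index]
    simp
  rw [← h, AddEquiv.apply_symm_apply]

lemma coeff_eq_zero_of_deg_lt (x : R) (n : ℕ) (h : e.deg x < n) : e.coeff x n = 0 := by
  by_contra h'
  exact absurd (Finset.le_sup (f := id) (Finsupp.mem_support_iff.2 h')) (not_le.2 h)

lemma deg_mem_support (x : R) (hx : x ≠ 0) : e.deg x ∈ (e.coeff x).support := by
  have h : (e.coeff x).support.Nonempty := by
    rw [Finsupp.support_nonempty_iff]
    intro h0
    exact hx (e.coeff.injective (by simp [h0]))
  obtain ⟨b, hb, hsup⟩ := Finset.exists_mem_eq_sup _ h id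
  rw [deg, hsup]; exact hb

lemma lead_ne_zero (x : R) (hx : x ≠ 0) : e.coeff x (e.deg x) ≠ 0 :=
  Finsupp.mem_support_iff.1 (e.deg_mem_support x hx)

lemma mono_mul (m : ℕ) : ∀ (a b : A) (k : ℕ),
    (∀ n, m + k < n → e.coeff (e.ι a * e.d ^ m * (e.ι b * e.d ^ k)) n = 0) ∧
    e.coeff (e.ι a * e.d ^ m * (e.ι b * e.d ^ k)) (m + k) = a * (σ ^ m) b := by
  induction m with
  | zero =>
    intro a b k
    have h : e.ι a * e.d ^ 0 * (e.ι b * e.d ^ k) = e.ι (a * b) * e.d ^ k := by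
      rw [pow_zero, mul_one, ← mul_assoc, ← map_mul]
    rw [h, e.coeff_mono]
    constructor
    · intro n hn
      rw [Finsupp.single_apply, if_neg (by omega)]
    · simp [Finsupp.single_apply]
  | succ m ih =>
    intro a b k
    have h : e.ι a * e.d ^ (m + 1) * (e.ι b * e.d ^ k) =
        e.ι a * e.d ^ m * (e.ι (σ b) * e.d ^ (k + 1)) +
        e.ι a * e.d ^ m * (e.ι (δ b) * e.d ^ k) := by
      rw [pow_succ, mul_assoc (e.ι a), mul_assoc (e.d ^ m), ← mul_assoc e.d,
        e.comm b, add_mul, mul_assoc (e.ι (σ b)), ← pow_succ', ← mul_add,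
        ← mul_assoc]
    rw [h, map_add]
    constructor
    · intro n hn
      rw [Finsupp.add_apply, (ih a (σ b) (k+1)).1 n (by omega),
        (ih a (δ b) k).1 n (by omega), add_zero]
    · have hmk : m + 1 + k = m + (k + 1) := by omega
      rw [Finsupp.add_apply, hmk, (ih a (σ b) (k+1)).2,
        (ih a (δ b) k).1 (m + (k+1)) (by omega), add_zero, pow_succ]
      rfl

lemma repr (x : R) :
    x = ∑ m ∈ (e.coeff x).support, e.ι (e.coeff x m) * e.d ^ m := by
  conv_lhs => rw [← e.coeff.symm_apply_apply x, e.coeff_symm]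
  rfl

lemma coeff_mul_apply (x y : R) (n : ℕ) :
    e.coeff (x * y) n = ∑ m ∈ (e.coeff x).support, ∑ k ∈ (e.coeff y).support,
      e.coeff (e.ι (e.coeff x m) * e.d ^ m * (e.ι (e.coeff y k) * e.d ^ k)) n := by
  conv_lhs => rw [e.repr x, e.repr y, Finset.sum_mul_sum]
  rw [map_sum, Finsupp.finset_sum_apply]
  refine Finset.sum_congr rfl fun m _ => ?_
  rw [map_sum, Finsupp.finset_sum_apply]

lemma coeff_mul_of_deg_lt (x y : R) (n : ℕ) (h : e.deg x + e.deg y < n) :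
    e.coeff (x * y) n = 0 := by
  rw [e.coeff_mul_apply]
  refine Finset.sum_eq_zero fun m hm => Finset.sum_eq_zero fun k hk => ?_
  have h1 : m ≤ e.deg x := Finset.le_sup (f := id) hm
  have h2 : k ≤ e.deg y := Finset.le_sup (f := id) hk
  exact (e.mono_mul m _ _ k).1 n (by omega)

lemma coeff_mul_deg (x y : R) :
    e.coeff (x * y) (e.deg x + e.deg y) =
      e.coeff x (e.deg x) * (σ ^ e.deg x) (e.coeff y (e.deg y)) := by
  by_cases hx : x = 0
  · subst hx; simp
  by_cases hy : y = 0
  · subst hy; simp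
  rw [e.coeff_mul_apply]
  rw [Finset.sum_eq_single_of_mem (e.deg x) (e.deg_mem_support x hx) ?_]
  · rw [Finset.sum_eq_single_of_mem (e.deg y) (e.deg_mem_support y hy) ?_]
    · exact (e.mono_mul _ _ _ _).2
    · intro k hk hkne
      have h2 : k ≤ e.deg y := Finset.le_sup (f := id) hk
      exact (e.mono_mul _ _ _ _).1 _ (by omega)
  · intro m hm hmne
    have h1 : m ≤ e.deg x := Finset.le_sup (f := id) hm
    refine Finset.sum_eq_zero fun k hk => ?_
    have h2 : k ≤ e.deg y := Finset.le_sup (f := id) hk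
    exact (e.mono_mul _ _ _ _).1 _ (by omega)

lemma pow_sigma_ne_zero (e : OreExtension A R σ δ) (hσ : Function.Injective σ)
    {a : A} (ha : a ≠ 0) (m : ℕ) : (σ ^ m) a ≠ 0 := by
  intro h0
  have hinj : Function.Injective (σ ^ m) := by
    rw [RingHom.coe_pow]; exact Function.Injective.iterate hσ m
  exact ha (hinj (by rw [h0, map_zero]))

include e in
lemma mul_ne_zero'' (hσ : Function.Injective σ) {x y : R} (hx : x ≠ 0) (hy : y ≠ 0) :
    x * y ≠ 0 := by
  intro h
  have h1 : e.coeff (x * y) (e.deg x + e.deg y) = 0 := by rw [h]; simp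
  rw [e.coeff_mul_deg] at h1
  exact mul_ne_zero (e.lead_ne_zero x hx)
    (e.pow_sigma_ne_zero hσ (e.lead_ne_zero y hy) _) h1

lemma deg_mono (c : A) (hc : c ≠ 0) (k : ℕ) : e.deg (e.ι c * e.d ^ k) = k := by
  rw [deg, e.coeff_mono, Finsupp.support_single_ne_zero _ hc, Finset.sup_singleton]
  rfl

lemma coeff_mono_self (c : A) (k : ℕ) : e.coeff (e.ι c * e.d ^ k) k = c := by
  rw [e.coeff_mono, Finsupp.single_eq_same]

end OreExtension

/-- If `A` is a division ring, `σ` an injective endomorphism and `δ` a `σ`-derivation,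
then the Ore extension `R = A[∂; σ, δ]` is a left principal ideal domain:
it has no zero divisors and every left ideal is generated by a single element. -/
theorem ore_extension_left_PID {A R : Type*} [DivisionRing A] [Ring R]
    (σ : A →+* A) (δ : A →+ A) (hσ : Function.Injective σ)
    (hδ : ∀ a b : A, δ (a * b) = σ a * δ b + δ a * b)
    (e : OreExtension A R σ δ) :
    (∀ a b : R, a * b = 0 → a = 0 ∨ b = 0) ∧
      (∀ I : Ideal R, ∃ g : R, I = Ideal.span {g}) := by
  constructor
  · intro a b hab
    by_contra h
    push_neg at h
    exact e.mul_ne_zero'' hσ h.1 h.2 hab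
  · intro I
    classical
    by_cases hI : ∀ f ∈ I, f = (0 : R)
    · refine ⟨0, le_antisymm (fun f hf => ?_) ?_⟩
      · rw [hI f hf]; exact Ideal.zero_mem _
      · rw [Ideal.span_le]
        intro x hx
        rw [Set.mem_singleton_iff] at hx
        rw [hx]; exact I.zero_mem
    · push_neg at hI
      obtain ⟨f0, hf0I, hf0⟩ := hI
      have hP : ∃ n, ∃ f ∈ I, f ≠ 0 ∧ e.deg f = n := ⟨e.deg f0, f0, hf0I, hf0, rfl⟩
      obtain ⟨g, hgI, hg0, hgdeg⟩ := Nat.find_spec hP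
      refine ⟨g, le_antisymm (fun f hf => ?_) ?_⟩
      swap
      · rw [Ideal.span_le]
        intro x hx
        rw [Set.mem_singleton_iff] at hx
        rw [hx]; exact hgI
      · -- strong induction on degree
        have main : ∀ n : ℕ, ∀ f ∈ I, e.deg f ≤ n → f ∈ Ideal.span {g} := by
          intro n
          induction n using Nat.strong_induction_on with
          | _ n ih =>
          intro f hfI hfn
          by_cases hf0' : f = 0
          · rw [hf0']; exact Ideal.zero_mem _
          -- minimality of deg g
          have hdg : e.deg g ≤ e.deg f := by
            rw [hgdeg]
            exact Nat.find_min' hP ⟨f, hfI, hf0', rfl⟩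
          set k := e.deg f - e.deg g with hk
          set u := (σ ^ k) (e.coeff g (e.deg g)) with hu
          have hune : u ≠ 0 := e.pow_sigma_ne_zero hσ (e.lead_ne_zero g hg0) k
          set c := e.coeff f (e.deg f) * u⁻¹ with hc
          have hcne : c ≠ 0 :=
            mul_ne_zero (e.lead_ne_zero f hf0') (inv_ne_zero hune)
          have hcu : c * u = e.coeff f (e.deg f) := by
            rw [hc, mul_assoc, inv_mul_cancel₀ hune, mul_one]
          set q := e.ι c * e.d ^ k * g with hq
          have hqI : q ∈ I := I.mul_mem_left _ hgI
          have hqspan : q ∈ Ideal.span {g} := Ideal.mem_span_singleton'.mpr ⟨_, rfl⟩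
          have hdegx : e.deg (e.ι c * e.d ^ k) = k := e.deg_mono c hcne k
          have hsum : e.deg (e.ι c * e.d ^ k) + e.deg g = e.deg f := by
            rw [hdegx, hk]; omega
          -- coefficient of q at deg f
          have hqtop : e.coeff q (e.deg f) = e.coeff f (e.deg f) := by
            conv_lhs => rw [hq, ← hsum]
            rw [e.coeff_mul_deg, hdegx, e.coeff_mono_self, ← hu, hcu]
          have hqhigh : ∀ m, e.deg f < m → e.coeff q m = 0 := by
            intro m hm
            exact e.coeff_mul_of_deg_lt _ _ m (by rw [hsum]; exact hm)
          set f' := f - q with hf'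
          have hf'I : f' ∈ I := I.sub_mem hfI hqI
          have hf'coeff : ∀ m, e.deg f ≤ m → e.coeff f' m = 0 := by
            intro m hm
            rw [hf', map_sub, Finsupp.sub_apply]
            rcases eq_or_lt_of_le hm with h | h
            · rw [← h, hqtop, sub_self]
            · rw [e.coeff_eq_zero_of_deg_lt f m h, hqhigh m h, sub_self]
          by_cases hf'0 : f' = 0
          · have : f = q := by rw [← sub_eq_zero]; exact hf'0
            rw [this]; exact hqspan
          · have hlt : e.deg f' < e.deg f := by
              have hmem := e.deg_mem_support f' hf'0
              rw [Finsupp.mem_support_iff] at hmem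
              by_contra hh
              exact hmem (hf'coeff _ (le_of_not_gt hh))
            have hf'span : f' ∈ Ideal.span {g} :=
              ih (e.deg f') (lt_of_lt_of_le hlt hfn) f' hf'I le_rfl
            have : f = f' + q := by rw [hf', sub_add_cancel]
            rw [this]
            exact Ideal.add_mem _ hf'span hqspan
        exact main (e.deg f) f hf le_rfl
end

section
/- Let A be a skew field (division ring) and R = A[∂; σ, δ] an Ore extension with σ an automorphism of A. Let a, b, c, d ∈ R \ {0} and suppose there exist unimodular matrices U, V ∈ R^{2×2} with U·Diag(a,b)·V = Diag(c,d). Then deg(a) + deg(b) = deg(c) + deg(d), where deg denotes degree in ∂. -/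
/-- `Submodule.quotientPi` needs a commutative ring. -/
noncomputable def Submodule.quotientPiLinearEquiv {K ι : Type*} [Ring K] {M : ι → Type*}
    [∀ i, AddCommGroup (M i)] [∀ i, Module K (M i)] (p : ∀ i, Submodule K (M i)) :
    ((∀ i, M i) ⧸ Submodule.pi Set.univ p) ≃ₗ[K] ∀ i, M i ⧸ p i :=
  let F : (∀ i, M i) →ₗ[K] ∀ i, M i ⧸ p i :=
    LinearMap.pi fun i => (p i).mkQ ∘ₗ LinearMap.proj i
  have hker : LinearMap.ker F = Submodule.pi Set.univ p := by
    ext x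
    simp [F, Submodule.mem_pi, funext_iff]
  (Submodule.quotEquivOfEq _ _ hker.symm).trans <| F.quotKerEquivOfSurjective fun y =>
    ⟨fun i => (Submodule.Quotient.mk_surjective _ (y i)).choose,
      funext fun i => (Submodule.Quotient.mk_surjective _ (y i)).choose_spec⟩

namespace OreExtension

section Ring

variable {A R : Type*} [Ring A] [Ring R] {σ : A →+* A} {δ : A →+ A}
  (e : OreExtension A R σ δ)

theorem coeff_ι_mul_d_pow (a : A) (n : ℕ) :
    e.coeff (e.ι a * e.d ^ n) = Finsupp.single n a := by
  rw [← e.coeff.apply_symm_apply (Finsupp.single n a), e.coeff_symm,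
    Finsupp.sum_single_index (by simp)]

theorem coeff_symm_smul (a : A) (p : ℕ →₀ A) :
    e.coeff.symm (a • p) = e.ι a * e.coeff.symm p := by
  rw [e.coeff_symm, e.coeff_symm, Finsupp.sum_smul_index (by simp), Finsupp.sum, Finsupp.sum,
    Finset.mul_sum]
  simp only [map_mul, mul_assoc]

theorem coeff_ι_mul (a : A) (r : R) : e.coeff (e.ι a * r) = a • e.coeff r :=
  e.coeff.symm.injective <| by rw [coeff_symm_smul, AddEquiv.symm_apply_apply,
    AddEquiv.symm_apply_apply]

/-- Elements of degree `< k`; unlike `deg`, this treats `0` correctly (it lies in `degLT 0`). -/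
noncomputable def degLT (k : ℕ) : AddSubgroup R :=
  (Finsupp.supported A A (Set.Iio k)).toAddSubgroup.comap e.coeff.toAddMonoidHom

theorem mem_degLT {k : ℕ} {r : R} : r ∈ e.degLT k ↔ ∀ m, k ≤ m → e.coeff r m = 0 := by
  simp [degLT, Finsupp.mem_supported']

theorem degLT_mono {k l : ℕ} (h : k ≤ l) : e.degLT k ≤ e.degLT l := fun _ hr =>
  e.mem_degLT.2 fun m hm => e.mem_degLT.1 hr m (h.trans hm)

theorem eq_zero_of_mem_degLT_zero {r : R} (hr : r ∈ e.degLT 0) : r = 0 :=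
  e.coeff.injective <| Finsupp.ext fun m => by simpa using e.mem_degLT.1 hr m m.zero_le

theorem ι_mul_d_pow_mem_degLT (a : A) (n : ℕ) : e.ι a * e.d ^ n ∈ e.degLT (n + 1) :=
  e.mem_degLT.2 fun m hm => by rw [coeff_ι_mul_d_pow, Finsupp.single_apply, if_neg (by omega)]

theorem exists_eq_ι_mul_d_pow_add {k : ℕ} {r : R} (hr : r ∈ e.degLT (k + 1)) :
    ∃ r' ∈ e.degLT k, r = e.ι (e.coeff r k) * e.d ^ k + r' := by
  refine ⟨r - e.ι (e.coeff r k) * e.d ^ k, e.mem_degLT.2 fun m hm => ?_, by abel⟩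
  rw [map_sub, Finsupp.sub_apply, coeff_ι_mul_d_pow, Finsupp.single_apply]
  rcases hm.eq_or_lt with rfl | hlt
  · simp
  · rw [if_neg hlt.ne, e.mem_degLT.1 hr m hlt, sub_zero]

theorem ι_mul_mem_degLT (a : A) {k : ℕ} {r : R} (hr : r ∈ e.degLT k) :
    e.ι a * r ∈ e.degLT k :=
  e.mem_degLT.2 fun m hm => by
    rw [coeff_ι_mul, Finsupp.smul_apply, e.mem_degLT.1 hr m hm, smul_zero]

theorem d_mul_mem_degLT {k : ℕ} {r : R} (hr : r ∈ e.degLT k) : e.d * r ∈ e.degLT (k + 1) := by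
  induction k generalizing r with
  | zero => rw [e.eq_zero_of_mem_degLT_zero hr, mul_zero]; exact zero_mem _
  | succ k ih =>
    obtain ⟨r', hr', hr_eq⟩ := e.exists_eq_ι_mul_d_pow_add hr
    have hcomm (a : A) : e.d * (e.ι a * e.d ^ k) =
        e.ι (σ a) * e.d ^ (k + 1) + e.ι (δ a) * e.d ^ k := by
      rw [← mul_assoc, e.comm, add_mul, mul_assoc, pow_succ']
    rw [hr_eq, mul_add, hcomm]
    exact add_mem (add_mem (e.ι_mul_d_pow_mem_degLT _ _)
      (e.degLT_mono (by omega) (e.ι_mul_d_pow_mem_degLT _ _))) (e.degLT_mono (by omega) (ih hr'))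

theorem d_pow_mul_mem_degLT {k : ℕ} {r : R} (hr : r ∈ e.degLT k) (n : ℕ) :
    e.d ^ n * r ∈ e.degLT (k + n) := by
  induction n with
  | zero => simpa
  | succ n ih => rw [pow_succ', mul_assoc, ← add_assoc]; exact e.d_mul_mem_degLT ih

theorem mul_mem_degLT {k l : ℕ} {x y : R} (hx : x ∈ e.degLT k) (hy : y ∈ e.degLT (l + 1)) :
    x * y ∈ e.degLT (k + l) := by
  induction k generalizing x with
  | zero => rw [e.eq_zero_of_mem_degLT_zero hx, zero_mul]; exact zero_mem _
  | succ k ih =>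
    obtain ⟨x', hx', hx_eq⟩ := e.exists_eq_ι_mul_d_pow_add hx
    have hlead := e.ι_mul_mem_degLT (e.coeff x k) (e.d_pow_mul_mem_degLT hy k)
    rw [show l + 1 + k = k + 1 + l by omega, ← mul_assoc] at hlead
    rw [hx_eq, add_mul]
    exact add_mem hlead (e.degLT_mono (by omega) (ih hx'))

theorem d_pow_mul_ι_sub_mem_degLT (a : A) (k : ℕ) :
    e.d ^ k * e.ι a - e.ι ((σ ^ k) a) * e.d ^ k ∈ e.degLT k := by
  induction k with
  | zero => simp
  | succ k ih =>
    have h : e.d ^ (k + 1) * e.ι a - e.ι ((σ ^ (k + 1)) a) * e.d ^ (k + 1) =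
        e.ι (δ ((σ ^ k) a)) * e.d ^ k +
          e.d * (e.d ^ k * e.ι a - e.ι ((σ ^ k) a) * e.d ^ k) := by
      rw [pow_succ' e.d, RingHom.coe_pow, Function.iterate_succ_apply', ← RingHom.coe_pow,
        mul_sub, ← mul_assoc e.d (e.ι _), e.comm]
      noncomm_ring
    rw [h]
    exact add_mem (e.ι_mul_d_pow_mem_degLT _ _) (e.d_mul_mem_degLT ih)

theorem coeff_mul_add_of_mem_degLT {k l : ℕ} {x y : R} (hx : x ∈ e.degLT (k + 1))
    (hy : y ∈ e.degLT (l + 1)) :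
    e.coeff (x * y) (k + l) = e.coeff x k * (σ ^ k) (e.coeff y l) := by
  obtain ⟨x', hx', hx_eq⟩ := e.exists_eq_ι_mul_d_pow_add hx
  obtain ⟨y', hy', hy_eq⟩ := e.exists_eq_ι_mul_d_pow_add hy
  set a := e.coeff x k
  set b := e.coeff y l
  have hsplit : x * y - e.ι (a * (σ ^ k) b) * e.d ^ (k + l) =
      e.ι a * ((e.d ^ k * e.ι b - e.ι ((σ ^ k) b) * e.d ^ k) * e.d ^ l) +
        e.ι a * (e.d ^ k * y') + x' * y := by
    rw [hx_eq, hy_eq, map_mul, pow_add]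
    noncomm_ring
  have hlower : x * y - e.ι (a * (σ ^ k) b) * e.d ^ (k + l) ∈ e.degLT (k + l) := by
    rw [hsplit]
    refine add_mem (add_mem (e.ι_mul_mem_degLT a ?_) (e.ι_mul_mem_degLT a ?_))
      (e.mul_mem_degLT hx' hy)
    · simpa using
        e.mul_mem_degLT (e.d_pow_mul_ι_sub_mem_degLT b k) (e.ι_mul_d_pow_mem_degLT 1 l)
    · simpa [add_comm] using e.d_pow_mul_mem_degLT hy' k
  have := e.mem_degLT.1 hlower (k + l) le_rfl
  rwa [map_sub, Finsupp.sub_apply, coeff_ι_mul_d_pow, Finsupp.single_eq_same, sub_eq_zero] at this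

theorem mem_degLT_deg_add_one (r : R) : r ∈ e.degLT (e.deg r + 1) :=
  e.mem_degLT.2 fun m hm => Finsupp.notMem_support_iff.1 fun h => by
    have : m ≤ e.deg r := Finset.le_sup (f := id) h
    omega

theorem coeff_deg_ne_zero {r : R} (hr : r ≠ 0) : e.coeff r (e.deg r) ≠ 0 := by
  have hne : (e.coeff r).support.Nonempty := by
    simpa [Finsupp.support_nonempty_iff] using hr
  obtain ⟨m, hm, hdeg⟩ := Finset.exists_mem_eq_sup _ hne id
  rw [deg, hdeg]
  exact Finsupp.mem_support_iff.1 hm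

/-- The left ideal `R m`, transported by `coeff` to an `A`-submodule of `ℕ →₀ A`. -/
def leftIdeal (m : R) : Submodule A (ℕ →₀ A) where
  carrier := {p | ∃ q, e.coeff.symm p = q * m}
  add_mem' := by
    rintro p p' ⟨q, hq⟩ ⟨q', hq'⟩
    exact ⟨q + q', by rw [map_add, hq, hq', add_mul]⟩
  zero_mem' := ⟨0, by rw [map_zero, zero_mul]⟩
  smul_mem' := by
    rintro a p ⟨q, hq⟩
    exact ⟨e.ι a * q, by rw [coeff_symm_smul, hq, mul_assoc]⟩

theorem coeff_mul_mem_leftIdeal (q m : R) : e.coeff (q * m) ∈ e.leftIdeal m :=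
  ⟨q, e.coeff.symm_apply_apply _⟩

variable {n o : Type*} [Fintype n]

/-- Right multiplication `x ↦ x ᵥ* W` of row vectors over `R`, read on coefficients. -/
noncomputable def vecMulCoeff (W : Matrix n o R) :
    (n → ℕ →₀ A) →ₗ[A] (o → ℕ →₀ A) where
  toFun x j := e.coeff (Matrix.vecMul (fun i => e.coeff.symm (x i)) W j)
  map_add' x y := by
    funext j
    simp only [Pi.add_apply, map_add, ← Pi.add_def, Matrix.add_vecMul]
  map_smul' a x := by
    funext j
    have hx : (fun i => e.coeff.symm ((a • x) i)) = e.ι a • fun i => e.coeff.symm (x i) :=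
      funext fun i => e.coeff_symm_smul a (x i)
    rw [hx, Matrix.smul_vecMul, Pi.smul_apply, smul_eq_mul, coeff_ι_mul]
    rfl

theorem vecMulCoeff_apply (W : Matrix n o R) (x : n → ℕ →₀ A) (j : o) :
    e.vecMulCoeff W x j = e.coeff (Matrix.vecMul (fun i => e.coeff.symm (x i)) W j) :=
  rfl

theorem vecMulCoeff_mul {p : Type*} [Fintype o] (W₁ : Matrix n o R) (W₂ : Matrix o p R) :
    e.vecMulCoeff (W₁ * W₂) = e.vecMulCoeff W₂ ∘ₗ e.vecMulCoeff W₁ :=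
  LinearMap.ext fun x => funext fun j => by
    simp only [LinearMap.comp_apply, vecMulCoeff_apply, AddEquiv.symm_apply_apply,
      Matrix.vecMul_vecMul]

variable [DecidableEq n]

theorem vecMulCoeff_one : e.vecMulCoeff (1 : Matrix n n R) = LinearMap.id :=
  LinearMap.ext fun x => funext fun j => by
    simp only [vecMulCoeff_apply, Matrix.vecMul_one, AddEquiv.apply_symm_apply, LinearMap.id_apply]

noncomputable def vecMulCoeffEquiv (W : (Matrix n n R)ˣ) :
    (n → ℕ →₀ A) ≃ₗ[A] (n → ℕ →₀ A) :=
  .ofLinearMap (e.vecMulCoeff W) (e.vecMulCoeff ↑W⁻¹)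
    (by rw [← vecMulCoeff_mul, W.inv_mul, vecMulCoeff_one])
    (by rw [← vecMulCoeff_mul, W.mul_inv, vecMulCoeff_one])

theorem range_vecMulCoeff_mul_mul (U V : (Matrix n n R)ˣ) (D : Matrix n n R) :
    LinearMap.range (e.vecMulCoeff ((U : Matrix n n R) * D * (V : Matrix n n R))) =
      (LinearMap.range (e.vecMulCoeff D)).map (e.vecMulCoeffEquiv V).toLinearMap := by
  rw [vecMulCoeff_mul, vecMulCoeff_mul, LinearMap.range_comp, LinearMap.range_comp_of_range_eq_top]
  · rfl
  · exact LinearMap.range_eq_top.2 (e.vecMulCoeffEquiv U).surjective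

theorem range_vecMulCoeff_diagonal (v : n → R) :
    LinearMap.range (e.vecMulCoeff (Matrix.diagonal v)) =
      Submodule.pi Set.univ fun i => e.leftIdeal (v i) := by
  ext y
  simp only [LinearMap.mem_range, Submodule.mem_pi, Set.mem_univ, true_implies]
  constructor
  · rintro ⟨x, rfl⟩ i
    exact ⟨e.coeff.symm (x i), by simp [vecMulCoeff_apply, Matrix.vecMul_diagonal]⟩
  · intro hy
    choose q hq using hy
    exact ⟨fun i => e.coeff (q i), funext fun i => by
      simp [vecMulCoeff_apply, Matrix.vecMul_diagonal, ← hq i]⟩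

end Ring

section DivisionRing

variable {A R : Type*} [DivisionRing A] [Ring R] {σ : A →+* A} {δ : A →+ A}
  (e : OreExtension A R σ δ)

theorem eq_zero_of_mul_mem_degLT_deg {q m : R} (hm : m ≠ 0) (h : q * m ∈ e.degLT (e.deg m)) :
    q = 0 := by
  by_contra hq
  have := e.mem_degLT.1 h (e.deg q + e.deg m) (by omega)
  rw [e.coeff_mul_add_of_mem_degLT (e.mem_degLT_deg_add_one q) (e.mem_degLT_deg_add_one m)] at this
  exact mul_ne_zero (e.coeff_deg_ne_zero hq) ((map_ne_zero _).2 (e.coeff_deg_ne_zero hm)) this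

theorem exists_sub_mul_mem_degLT {m : R} (hm : m ≠ 0) (r : R) :
    ∃ q, r - q * m ∈ e.degLT (e.deg m) := by
  suffices h : ∀ j, ∀ r ∈ e.degLT (j + e.deg m), ∃ q, r - q * m ∈ e.degLT (e.deg m) from
    h (e.deg r + 1) r (e.degLT_mono (by omega) (e.mem_degLT_deg_add_one r))
  intro j
  induction j with
  | zero => exact fun r hr => ⟨0, by simpa using hr⟩
  | succ j ih =>
    intro r hr
    set t := e.deg m
    -- `ι c * ∂ ^ j * m` has the same coefficient as `r` in the top degree `j + t`
    set c := e.coeff r (j + t) * ((σ ^ j) (e.coeff m t))⁻¹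
    have hcm : e.ι c * e.d ^ j * m ∈ e.degLT (j + t + 1) := by
      simpa [add_right_comm] using
        e.mul_mem_degLT (e.ι_mul_d_pow_mem_degLT c j) (e.mem_degLT_deg_add_one m)
    have hlead : e.coeff (e.ι c * e.d ^ j * m) (j + t) = e.coeff r (j + t) := by
      rw [e.coeff_mul_add_of_mem_degLT (e.ι_mul_d_pow_mem_degLT c j) (e.mem_degLT_deg_add_one m),
        coeff_ι_mul_d_pow, Finsupp.single_eq_same, mul_assoc,
        inv_mul_cancel₀ ((map_ne_zero _).2 (e.coeff_deg_ne_zero hm)), mul_one]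
    have hlower : r - e.ι c * e.d ^ j * m ∈ e.degLT (j + t) := by
      refine e.mem_degLT.2 fun k hk => ?_
      rw [map_sub, Finsupp.sub_apply, sub_eq_zero]
      rcases hk.eq_or_lt with rfl | hlt
      · exact hlead.symm
      · rw [e.mem_degLT.1 hr k (by omega), e.mem_degLT.1 hcm k hlt]
    obtain ⟨q, hq⟩ := ih _ hlower
    exact ⟨q + e.ι c * e.d ^ j, by rwa [add_mul, ← sub_sub, sub_right_comm]⟩

theorem isCompl_leftIdeal_supported {m : R} (hm : m ≠ 0) :
    IsCompl (e.leftIdeal m) (Finsupp.supported A A (Set.Iio (e.deg m))) := by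
  constructor
  · rw [Submodule.disjoint_def]
    rintro p ⟨q, hq⟩ hp
    have hqm : q * m ∈ e.degLT (e.deg m) := hq ▸ by simpa [degLT] using hp
    rw [e.eq_zero_of_mul_mem_degLT_deg hm hqm, zero_mul] at hq
    exact e.coeff.symm.injective (hq.trans (map_zero _).symm)
  · rw [codisjoint_iff, eq_top_iff]
    rintro p -
    obtain ⟨q, hq⟩ := e.exists_sub_mul_mem_degLT hm (e.coeff.symm p)
    have hp : p = e.coeff (q * m) + e.coeff (e.coeff.symm p - q * m) := by simp
    rw [hp]
    exact Submodule.add_mem_sup (e.coeff_mul_mem_leftIdeal q m) hq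

noncomputable def quotientLeftIdealEquiv {m : R} (hm : m ≠ 0) :
    ((ℕ →₀ A) ⧸ e.leftIdeal m) ≃ₗ[A] (Set.Iio (e.deg m) →₀ A) :=
  (Submodule.quotientEquivOfIsCompl _ _ (e.isCompl_leftIdeal_supported hm)).trans
    (Finsupp.supportedEquivFinsupp _)

variable {n : Type*} [Fintype n] [DecidableEq n]

theorem finrank_quotient_range_vecMulCoeff_diagonal {v : n → R} (hv : ∀ i, v i ≠ 0) :
    Module.finrank A
        ((n → ℕ →₀ A) ⧸ LinearMap.range (e.vecMulCoeff (Matrix.diagonal v))) =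
      ∑ i, e.deg (v i) := by
  have hquot :
      ((n → ℕ →₀ A) ⧸ LinearMap.range (e.vecMulCoeff (Matrix.diagonal v))) ≃ₗ[A]
        ((i : n) → Set.Iio (e.deg (v i)) →₀ A) :=
    (Submodule.quotEquivOfEq _ _ (e.range_vecMulCoeff_diagonal v)).trans
      ((Submodule.quotientPiLinearEquiv fun i => e.leftIdeal (v i)).trans
        (LinearEquiv.piCongrRight fun i => e.quotientLeftIdealEquiv (hv i)))
  rw [hquot.finrank_eq]
  simp [Module.finrank_pi_fintype]

theorem sum_deg_eq_of_mul_diagonal_mul_eq_diagonal (U V : (Matrix n n R)ˣ) {v w : n → R}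
    (hv : ∀ i, v i ≠ 0) (hw : ∀ i, w i ≠ 0)
    (h : (U : Matrix n n R) * Matrix.diagonal v * (V : Matrix n n R) = Matrix.diagonal w) :
    ∑ i, e.deg (v i) = ∑ i, e.deg (w i) := by
  rw [← e.finrank_quotient_range_vecMulCoeff_diagonal hv,
    ← e.finrank_quotient_range_vecMulCoeff_diagonal hw, ← h, e.range_vecMulCoeff_mul_mul]
  exact (Submodule.Quotient.equiv _ _ (e.vecMulCoeffEquiv V) rfl).finrank_eq

end DivisionRing

end OreExtension

theorem deg_sum_invariant_general {A R : Type*} [DivisionRing A] [Ring R]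
    (σ : A →+* A) (δ : A →+ A)
    (e : OreExtension A R σ δ)
    (a b c d : R) (ha : a ≠ 0) (hb : b ≠ 0) (hc : c ≠ 0) (hd : d ≠ 0)
    (U V : Matrix (Fin 2) (Fin 2) R) (hU : IsUnit U) (hV : IsUnit V)
    (h : U * Matrix.diagonal ![a, b] * V = Matrix.diagonal ![c, d]) :
    e.deg a + e.deg b = e.deg c + e.deg d := by
  obtain ⟨U, rfl⟩ := hU
  obtain ⟨V, rfl⟩ := hV
  simpa using e.sum_deg_eq_of_mul_diagonal_mul_eq_diagonal U V
    (Fin.forall_fin_two.2 ⟨ha, hb⟩) (Fin.forall_fin_two.2 ⟨hc, hd⟩) h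

/-- Let `R = A[∂; σ, δ]` be an Ore extension of a skew field `A` with `σ` an
automorphism. If `Diag(a,b)` and `Diag(c,d)` are equivalent via unimodular matrices
`U, V` (i.e. `U·Diag(a,b)·V = Diag(c,d)`) with `a, b, c, d` nonzero, then
`deg a + deg b = deg c + deg d`. -/
theorem deg_sum_invariant {A R : Type*} [DivisionRing A] [Ring R]
    (σ : A →+* A) (δ : A →+ A) (hσ : Function.Bijective σ)
    (hδ : ∀ a b : A, δ (a * b) = σ a * δ b + δ a * b)
    (e : OreExtension A R σ δ)
    (a b c d : R) (ha : a ≠ 0) (hb : b ≠ 0) (hc : c ≠ 0) (hd : d ≠ 0)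
    (U V : Matrix (Fin 2) (Fin 2) R) (hU : IsUnit U) (hV : IsUnit V)
    (h : U * Matrix.diagonal ![a, b] * V = Matrix.diagonal ![c, d]) :
    e.deg a + e.deg b = e.deg c + e.deg d :=
  deg_sum_invariant_general σ δ e a b c d ha hb hc hd U V hU hV h
end

section
/- Let A = K(t)⟨S | St = tS + S⟩ be the first rational shift algebra over a field K of characteristic 0. The matrix Diag(S, S) ∈ A^{2×2} is not equivalent (via left and right multiplication by unimodular matrices over A) to any matrix of the form Diag(1, p) with p ∈ A. -/
section Aux
variable {F R : Type*} [Field F] [Ring R] {σ : F →+* F}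
  (e : OreExtension F R σ (0 : F →+ F))

lemma OreExtension.d_mul_ι (a : F) : e.d * e.ι a = e.ι (σ a) * e.d := by
  have h := e.comm a
  simpa using h

lemma OreExtension.pow_d_mul_ι (n : ℕ) (a : F) :
    e.d ^ n * e.ι a = e.ι ((σ ^ n) a) * e.d ^ n := by
  induction n generalizing a with
  | zero => simp
  | succ n ih =>
    calc e.d ^ (n + 1) * e.ι a = e.d ^ n * (e.d * e.ι a) := by
          rw [pow_succ, mul_assoc]
      _ = e.d ^ n * e.ι (σ a) * e.d := by rw [e.d_mul_ι, mul_assoc]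
      _ = e.ι ((σ ^ n) (σ a)) * e.d ^ n * e.d := by rw [ih]
      _ = e.ι ((σ ^ (n + 1)) a) * e.d ^ (n + 1) := by
          have hpow : (σ ^ (n + 1)) a = (σ ^ n) (σ a) := by rw [pow_succ]; rfl
          rw [mul_assoc, ← pow_succ, hpow]

lemma OreExtension.coeff_ι_mul_pow (a : F) (n : ℕ) :
    e.coeff (e.ι a * e.d ^ n) = Finsupp.single n a := by
  have h : e.coeff.symm (Finsupp.single n a) = e.ι a * e.d ^ n := by
    rw [e.coeff_symm, Finsupp.sum_single_index]
    simp
  rw [← h, e.coeff.apply_symm_apply]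

lemma OreExtension.term_eq (a b : F) (n m : ℕ) :
    e.ι a * e.d ^ n * e.d * (e.ι b * e.d ^ m)
      = e.ι (a * (σ ^ (n + 1)) b) * e.d ^ (n + 1 + m) := by
  calc e.ι a * e.d ^ n * e.d * (e.ι b * e.d ^ m)
      = e.ι a * (e.d ^ (n + 1) * e.ι b) * e.d ^ m := by
        rw [mul_assoc (e.ι a) (e.d ^ n) e.d, ← pow_succ, ← mul_assoc,
          mul_assoc (e.ι a)]
    _ = e.ι a * (e.ι ((σ ^ (n + 1)) b) * e.d ^ (n + 1)) * e.d ^ m := by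
        rw [e.pow_d_mul_ι]
    _ = e.ι (a * (σ ^ (n + 1)) b) * e.d ^ (n + 1 + m) := by
        rw [← mul_assoc, ← map_mul, mul_assoc, ← pow_add]

lemma OreExtension.coeff_mul_d_mul (u v : R) :
    e.coeff (u * e.d * v) 0 = 0 := by
  have hu : u = (e.coeff u).sum fun n a => e.ι a * e.d ^ n := by
    conv_lhs => rw [← e.coeff.symm_apply_apply u]
    rw [e.coeff_symm]
  have hv : v = (e.coeff v).sum fun m b => e.ι b * e.d ^ m := by
    conv_lhs => rw [← e.coeff.symm_apply_apply v]
    rw [e.coeff_symm]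
  rw [hu, hv, Finsupp.sum_mul, Finsupp.sum_mul]
  simp only [Finsupp.mul_sum]
  simp only [Finsupp.sum]
  rw [map_sum, Finsupp.finset_sum_apply]
  refine Finset.sum_eq_zero fun n _ => ?_
  rw [map_sum, Finsupp.finset_sum_apply]
  refine Finset.sum_eq_zero fun m _ => ?_
  rw [e.term_eq, e.coeff_ι_mul_pow, Finsupp.single_eq_of_ne]
  omega

lemma OreExtension.coeff_one : e.coeff (1 : R) 0 = 1 := by
  have h := e.coeff_ι_mul_pow (1 : F) 0
  simp only [map_one, pow_zero, mul_one] at h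
  rw [h, Finsupp.single_eq_same]

end Aux

/-- Let `A = K(t)⟨S | St = tS + S⟩` be the first rational shift algebra, modelled as
the Ore extension `R` of the field `F = K(t)` (of characteristic `0`) by `S = ∂` with
`σ` the shift automorphism (`σ(t) = t + 1`) and `δ = 0`. Then `Diag(S, S)` is not
equivalent, via unimodular `2×2` matrices over `R`, to any matrix `Diag(1, p)`. -/
theorem shift_diag_not_equiv {F R : Type*} [Field F] [CharZero F] [Ring R]
    (σ : F ≃+* F) (t : F) (hσt : σ t = t + 1)
    (e : OreExtension F R (σ : F →+* F) (0 : F →+ F)) :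
    ¬∃ (p : R) (U V : Matrix (Fin 2) (Fin 2) R), IsUnit U ∧ IsUnit V ∧
      U * Matrix.diagonal ![e.d, e.d] * V = Matrix.diagonal ![1, p] := by
  rintro ⟨p, U, V, -, -, hUV⟩
  have h00 := congrFun (congrFun hUV 0) 0
  rw [Matrix.mul_apply] at h00
  simp only [Matrix.mul_diagonal, Matrix.diagonal_apply_eq, Fin.sum_univ_two,
    Matrix.cons_val_zero, Matrix.cons_val_one, Matrix.head_cons] at h00
  have h := congrArg (fun r => e.coeff r 0) h00
  simp only [map_add, Finsupp.add_apply, e.coeff_mul_d_mul, e.coeff_one] at h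
  simp at h
end

section
/- In the first rational q-Weyl algebra R = K(x)⟨∂ | ∂x = q·x∂ + 1⟩ with q ∈ K \ {0, 1}, the element f = (q−1)∂ + x⁻¹ generates a proper two-sided ideal of R; in particular, R is not a simple ring. -/
/-- In the first rational `q`-Weyl algebra `R = K(x)⟨∂ | ∂x = q·x∂ + 1⟩` with
`q ∉ {0,1}`, modelled as the Ore extension of the field `F = K(x)` by `∂` with
`σ(g(x)) = g(qx)` (so `σ(x) = q·x`) and `δ(g) = (σ(g) − g)/((q−1)x)`, the element
`f = (q−1)∂ + x⁻¹` generates a proper, nonzero two-sided ideal; in particular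
`R` is not a simple ring. -/
theorem q_weyl_not_simple {F R : Type*} [Field F] [Ring R]
    (σ : F →+* F) (δ : F →+ F)
    (q x : F) (hq0 : q ≠ 0) (hq1 : q ≠ 1) (hx : x ≠ 0)
    (hσx : σ x = q * x)
    (hδdef : ∀ g : F, δ g = (σ g - g) / ((q - 1) * x))
    (e : OreExtension F R σ δ) :
    TwoSidedIdeal.span {e.ι (q - 1) * e.d + e.ι x⁻¹} ≠ (⊤ : TwoSidedIdeal R) ∧
      TwoSidedIdeal.span {e.ι (q - 1) * e.d + e.ι x⁻¹} ≠ (⊥ : TwoSidedIdeal R) := by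
  have hq1' : q - 1 ≠ 0 := sub_ne_zero.2 hq1
  have hqx : (q - 1) * x ≠ 0 := mul_ne_zero hq1' hx
  set c : F := -((q - 1) * x)⁻¹ with hc
  -- coefficient of monomials
  have coeff_mono : ∀ (a : F) (n : ℕ), e.coeff (e.ι a * e.d ^ n) = Finsupp.single n a := by
    intro a n
    have h1 : e.coeff.symm (Finsupp.single n a) = e.ι a * e.d ^ n := by
      rw [e.coeff_symm, Finsupp.sum_single_index (by simp)]
    rw [← h1, AddEquiv.apply_symm_apply]
  have expand : ∀ r : R, r = (e.coeff r).sum fun n a => e.ι a * e.d ^ n := by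
    intro r
    conv_lhs => rw [← e.coeff.symm_apply_apply r]
    rw [e.coeff_symm]
  -- the additive evaluation map
  let Ψ : R →+ F :=
    { toFun := fun r => (e.coeff r).sum fun n a => a * c ^ n
      map_zero' := by simp
      map_add' := by
        intro r s
        simp only [map_add]
        exact Finsupp.sum_add_index' (by simp) (by intro i b₁ b₂; ring) }
  have ψ_mono : ∀ (a : F) (n : ℕ), Ψ (e.ι a * e.d ^ n) = a * c ^ n := by
    intro a n
    show ((e.coeff (e.ι a * e.d ^ n)).sum fun n a => a * c ^ n) = a * c ^ n
    rw [coeff_mono, Finsupp.sum_single_index (by simp)]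
  have ψ_def : ∀ r : R, Ψ r = (e.coeff r).sum fun n a => a * c ^ n := fun _ => rfl
  -- the key scalar identity: σ b * c + δ b = c * b
  have scalar : ∀ b : F, σ b * c + δ b = c * b := by
    intro b
    rw [hδdef, hc]
    field_simp
    ring
  -- key: Ψ (ι a * r) = a * Ψ r
  have key1 : ∀ (a : F) (r : R), Ψ (e.ι a * r) = a * Ψ r := by
    intro a r
    conv_lhs => rw [expand r]
    rw [Finsupp.mul_sum, map_finsuppSum, ψ_def r, Finsupp.mul_sum]
    refine Finsupp.sum_congr fun n _ => ?_
    rw [← mul_assoc, ← map_mul, ψ_mono]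
    ring
  -- key: Ψ (d * r) = c * Ψ r
  have key2 : ∀ r : R, Ψ (e.d * r) = c * Ψ r := by
    intro r
    conv_lhs => rw [expand r]
    rw [Finsupp.mul_sum, map_finsuppSum, ψ_def r, Finsupp.mul_sum]
    refine Finsupp.sum_congr fun n _ => ?_
    rw [← mul_assoc, e.comm, add_mul, mul_assoc, ← pow_succ', map_add, ψ_mono, ψ_mono]
    rw [show ∀ b : F, σ b * c ^ (n + 1) + δ b * c ^ n = (σ b * c + δ b) * c ^ n from
      fun b => by ring, scalar]
    ring
  -- key: Ψ (ι a * d ^ n * r) = a * c ^ n * Ψ r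
  have key3 : ∀ (a : F) (n : ℕ) (r : R), Ψ (e.ι a * e.d ^ n * r) = a * c ^ n * Ψ r := by
    intro a n
    induction n with
    | zero => intro r; simp [key1]
    | succ n ih =>
      intro r
      have : e.ι a * e.d ^ (n + 1) * r = e.ι a * e.d ^ n * (e.d * r) := by
        simp [pow_succ, mul_assoc]
      rw [this, ih, key2, pow_succ]
      ring
  -- Ψ is multiplicative
  have key_mul : ∀ r s : R, Ψ (r * s) = Ψ r * Ψ s := by
    intro r s
    conv_lhs => rw [expand r]
    rw [Finsupp.sum_mul, map_finsuppSum, ψ_def r, Finsupp.sum_mul]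
    exact Finsupp.sum_congr fun n _ => key3 _ _ _
  have ψ_one : Ψ 1 = 1 := by
    have : (1 : R) = e.ι 1 * e.d ^ 0 := by simp
    rw [this, ψ_mono]; simp
  -- bundle as a ring hom
  let Φ : R →+* F :=
    { toFun := Ψ
      map_one' := ψ_one
      map_mul' := key_mul
      map_zero' := map_zero Ψ
      map_add' := map_add Ψ }
  set f : R := e.ι (q - 1) * e.d + e.ι x⁻¹ with hf
  have hΦf : Φ f = 0 := by
    show Ψ f = 0
    have : f = e.ι (q - 1) * e.d ^ 1 + e.ι x⁻¹ * e.d ^ 0 := by simp [hf]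
    rw [this, map_add, ψ_mono, ψ_mono, hc]
    field_simp
    ring
  constructor
  · -- not ⊤
    intro h
    have h1 : (1 : R) ∈ TwoSidedIdeal.span {f} := by rw [h]; trivial
    have h2 : (1 : R) ∈ TwoSidedIdeal.ker Φ := by
      refine TwoSidedIdeal.mem_span_iff.mp h1 _ ?_
      intro y hy
      rw [Set.mem_singleton_iff] at hy
      simp only [SetLike.mem_coe]
      rw [hy, TwoSidedIdeal.mem_ker]
      exact hΦf
    rw [TwoSidedIdeal.mem_ker, map_one] at h2
    exact one_ne_zero h2
  · -- not ⊥
    intro h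
    have hmem : f ∈ TwoSidedIdeal.span {f} := TwoSidedIdeal.subset_span rfl
    rw [h, TwoSidedIdeal.mem_bot] at hmem
    have : e.coeff f = Finsupp.single 1 (q - 1) + Finsupp.single 0 x⁻¹ := by
      have : f = e.ι (q - 1) * e.d ^ 1 + e.ι x⁻¹ * e.d ^ 0 := by simp [hf]
      rw [this, map_add, coeff_mono, coeff_mono]
    rw [hmem, map_zero] at this
    have h1 := congrFun (congrArg (fun p : ℕ →₀ F => (p : ℕ → F)) this) 1
    simp at h1
    exact hq1' h1.symm
end
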